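/- Let q > 2 be odd. Then f_{2,q}(n+1)/f_{2,q}(n) → 1 as n → ∞. -/

import Mathlib

open Filter Real

/-- Number of representations of `n` as a sum of distinct terms of the form `p^a * q^b`. -/
noncomputable def fpq (p q n : ℕ) : ℕ :=
  Set.ncard {S : Finset ℕ | (∀ k ∈ S, ∃ a b : ℕ, k = p ^ a * q ^ b) ∧ S.sum id = n}

/-!
For odd `q > 1` the numbers `2^a q^b` are pairwise distinct, and a representation of `n` splits
into its powers of two, which are the binary digits of their sum, and `q` times a
representation of some `m ≤ n / q`. Hence `f = fpq 2 q` satisfies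
`f n = ∑_{m ≤ n/q} f m`, the recurrence of the `q`-ary partition function.

From this recurrence, `f` is nondecreasing, constant on the blocks `[q t, q t + q)`, and jumps
by `f t` at `n + 1 = q t`. The jump is negligible: `f n ≥ ∑_{j < t} f j`, and each of the `k`
values `f j`, `t - k ≤ j < t`, is at least `f t - k f (t/q)`, while the `t - t/q ≥ k²` values
`f j`, `t/q ≤ j < t`, are each at least `f (t/q)`. So `k f t ≤ 2 f n` once `t ≥ 2k²`.
-/

open Finset Topology

def IsQaryRecurrent (q : ℕ) (f : ℕ → ℕ) : Prop :=
  ∀ n, f n = ∑ m ∈ range (n / q + 1), f m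

namespace IsQaryRecurrent

variable {q : ℕ} {f : ℕ → ℕ}

theorem monotone (hf : IsQaryRecurrent q f) : Monotone f := fun a b hab => by
  rw [hf a, hf b]
  exact sum_le_sum_of_subset (range_subset_range.2 (by gcongr))

theorem apply_succ_le (hf : IsQaryRecurrent q f) (n : ℕ) : f (n + 1) ≤ f n + f ((n + 1) / q) := by
  by_cases h : q ∣ n + 1
  · rw [hf (n + 1), Nat.succ_div_of_dvd h, sum_range_succ, ← hf n, ← Nat.succ_div_of_dvd h]
  · rw [hf (n + 1), Nat.succ_div_of_not_dvd h, ← hf n]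
    exact Nat.le_add_right _ _

theorem apply_le_add_mul (hf : IsQaryRecurrent q f) {j t : ℕ} (hjt : j ≤ t) :
    f t ≤ f j + (t - j) * f (t / q) := by
  induction t, hjt using Nat.le_induction with
  | base => simp
  | succ t hjt ih =>
    have hmono : f (t / q) ≤ f ((t + 1) / q) := hf.monotone (by gcongr; omega)
    calc f (t + 1) ≤ f t + f ((t + 1) / q) := hf.apply_succ_le t
      _ ≤ f j + (t - j) * f ((t + 1) / q) + f ((t + 1) / q) := by
          gcongr; exact ih.trans (by gcongr)
      _ = f j + (t + 1 - j) * f ((t + 1) / q) := by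
          rw [Nat.sub_add_comm hjt]; ring

theorem mul_le_two_mul_sum (hq : 2 ≤ q) (hf : IsQaryRecurrent q f) {k t : ℕ}
    (ht : 2 * k ^ 2 ≤ t) : k * f t ≤ 2 * ∑ j ∈ range t, f j := by
  have hkt : k ≤ t := by nlinarith
  have hnear : k * f t ≤ ∑ j ∈ Ico (t - k) t, f j + k * k * f (t / q) :=
    calc k * f t = ∑ _j ∈ Ico (t - k) t, f t := by simp [Nat.sub_sub_self hkt]
      _ ≤ ∑ j ∈ Ico (t - k) t, (f j + k * f (t / q)) :=
          sum_le_sum fun j hj => by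
            have hj := mem_Ico.1 hj
            exact (hf.apply_le_add_mul hj.2.le).trans (by gcongr; omega)
      _ = ∑ j ∈ Ico (t - k) t, f j + k * k * f (t / q) := by
          rw [sum_add_distrib, sum_const, Nat.card_Ico, Nat.sub_sub_self hkt, smul_eq_mul, mul_assoc]
  have hfar : k * k * f (t / q) ≤ ∑ j ∈ Ico (t / q) t, f j :=
    calc k * k * f (t / q) ≤ (t - t / q) * f (t / q) := by
          have : t / q ≤ t / 2 := Nat.div_le_div_left hq two_pos
          gcongr; rw [← sq]; omega
      _ = ∑ _j ∈ Ico (t / q) t, f (t / q) := by simp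
      _ ≤ ∑ j ∈ Ico (t / q) t, f j := sum_le_sum fun j hj => hf.monotone (mem_Ico.1 hj).1
  have hsub : ∀ a, ∑ j ∈ Ico a t, f j ≤ ∑ j ∈ range t, f j := fun a =>
    sum_le_sum_of_subset (by rw [range_eq_Ico]; exact Ico_subset_Ico_left (Nat.zero_le a))
  linarith [hsub (t - k), hsub (t / q)]

theorem eventually_mul_succ_le (hq : 2 ≤ q) (hf : IsQaryRecurrent q f) (k : ℕ) :
    ∀ᶠ n in atTop, k * f (n + 1) ≤ (k + 2) * f n := by
  filter_upwards [eventually_ge_atTop (2 * k ^ 2 * q)] with n hn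
  have ht : 2 * k ^ 2 ≤ (n + 1) / q := (Nat.le_div_iff_mul_le (by omega)).2 (by omega)
  have hsum : ∑ j ∈ range ((n + 1) / q), f j ≤ f n := by
    rw [hf n]
    refine sum_le_sum_of_subset (range_subset_range.2 ?_)
    rw [Nat.succ_div]
    split_ifs <;> omega
  calc k * f (n + 1) ≤ k * f n + k * f ((n + 1) / q) := by rw [← mul_add]; gcongr; exact hf.apply_succ_le n
    _ ≤ (k + 2) * f n := by linarith [hf.mul_le_two_mul_sum hq ht]

theorem tendsto_succ_div (hq : 2 ≤ q) (hf : IsQaryRecurrent q f) (h0 : 0 < f 0) :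
    Tendsto (fun n => (f (n + 1) : ℝ) / f n) atTop (𝓝 1) := by
  have hpos : ∀ n, (0 : ℝ) < f n := fun n => by exact_mod_cast h0.trans_le (hf.monotone n.zero_le)
  refine tendsto_order.2 ⟨fun a ha => Eventually.of_forall fun n => ?_, fun a ha => ?_⟩
  · refine ha.trans_le ((one_le_div (hpos n)).2 ?_)
    exact_mod_cast hf.monotone n.le_succ
  · obtain ⟨k, hk⟩ := exists_nat_gt (2 / (a - 1))
    have hk2 : 2 < k * (a - 1) := (div_lt_iff₀ (by linarith)).1 hk
    filter_upwards [hf.eventually_mul_succ_le hq k] with n hn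
    have hn' : (k : ℝ) * f (n + 1) ≤ (k + 2) * f n := by exact_mod_cast hn
    rw [div_lt_iff₀ (hpos n)]
    nlinarith [hpos n]

end IsQaryRecurrent

def binarySet (v : ℕ) : Finset ℕ :=
  v.bitIndices.toFinset.map ⟨(2 ^ ·), Nat.pow_right_injective le_rfl⟩

theorem sum_binarySet (v : ℕ) : (binarySet v).sum id = v := by
  simp [binarySet]

theorem exists_eq_two_pow_of_mem_binarySet {v k : ℕ} (hk : k ∈ binarySet v) : ∃ a, k = 2 ^ a := by
  obtain ⟨a, -, rfl⟩ := mem_map.1 hk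
  exact ⟨a, rfl⟩

theorem binarySet_sum {A : Finset ℕ} (hA : ∀ k ∈ A, ∃ a, k = 2 ^ a) :
    binarySet (A.sum id) = A := by
  have hA' : A = (A.preimage (2 ^ ·) (Nat.pow_right_injective le_rfl).injOn).map
      ⟨(2 ^ ·), Nat.pow_right_injective le_rfl⟩ := by
    ext k
    simp only [Finset.mem_map, mem_preimage, Function.Embedding.coeFn_mk]
    constructor
    · intro hk
      obtain ⟨a, rfl⟩ := hA k hk
      exact ⟨a, hk, rfl⟩
    · rintro ⟨a, ha, rfl⟩
      exact ha
  rw [hA']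
  simp [binarySet]

theorem Odd.not_dvd_two_pow {q : ℕ} (hodd : Odd q) (hq : 1 < q) (a : ℕ) : ¬ q ∣ 2 ^ a :=
  fun h => hq.ne' ((Nat.coprime_two_right.2 hodd).pow_right a |>.eq_one_of_dvd h)

theorem exists_eq_two_pow_mul_pow_of_mul_eq {q x a b : ℕ} (hq : 1 < q) (hodd : Odd q)
    (h : q * x = 2 ^ a * q ^ b) : ∃ b', x = 2 ^ a * q ^ b' := by
  obtain _ | b' := b
  · exact absurd ⟨x, by simpa using h.symm⟩ (hodd.not_dvd_two_pow hq a)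
  · refine ⟨b', Nat.eq_of_mul_eq_mul_left (by omega : 0 < q) ?_⟩
    rw [h]; ring

def reprSet (q n : ℕ) : Set (Finset ℕ) :=
  {S | (∀ k ∈ S, ∃ a b : ℕ, k = 2 ^ a * q ^ b) ∧ S.sum id = n}

theorem fpq_two_eq_ncard_reprSet (q n : ℕ) : fpq 2 q n = (reprSet q n).ncard := rfl

theorem reprSet_finite (q n : ℕ) : (reprSet q n).Finite := by
  refine (range (n + 1)).powerset.finite_toSet.subset fun S hS => ?_
  rw [mem_coe, mem_powerset]
  exact fun k hk => mem_range_succ_iff.2 (hS.2 ▸ single_le_sum (f := id) (by simp) hk)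

theorem empty_mem_reprSet_zero (q : ℕ) : ∅ ∈ reprSet q 0 := by
  simp [reprSet]

def highPart (q : ℕ) (S : Finset ℕ) : Finset ℕ :=
  {k ∈ S | q ∣ k}.image (· / q)

section Decomposition

variable {q : ℕ}

theorem mem_highPart (hq : 0 < q) {S : Finset ℕ} {x : ℕ} : x ∈ highPart q S ↔ q * x ∈ S := by
  simp only [highPart, mem_image, mem_filter]
  constructor
  · rintro ⟨_, ⟨hy, c, rfl⟩, rfl⟩
    rwa [Nat.mul_div_cancel_left c hq]
  · exact fun h => ⟨q * x, ⟨h, dvd_mul_right q x⟩, Nat.mul_div_cancel_left x hq⟩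

theorem image_mul_highPart (hq : 0 < q) (S : Finset ℕ) :
    (highPart q S).image (q * ·) = {k ∈ S | q ∣ k} := by
  ext k
  simp only [mem_image, mem_highPart hq, mem_filter]
  constructor
  · rintro ⟨x, hx, rfl⟩
    exact ⟨hx, dvd_mul_right q x⟩
  · rintro ⟨hk, x, rfl⟩
    exact ⟨x, hk, rfl⟩

theorem sum_eq_sum_filter_add_mul_sum_highPart (hq : 0 < q) (S : Finset ℕ) :
    S.sum id = {k ∈ S | ¬ q ∣ k}.sum id + q * (highPart q S).sum id := by
  have hhigh : q * (highPart q S).sum id = {k ∈ S | q ∣ k}.sum id := by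
    rw [← image_mul_highPart hq, sum_image fun x _ y _ h => Nat.eq_of_mul_eq_mul_left hq h, mul_sum]
    rfl
  rw [hhigh, sum_filter_not_add_sum_filter]

theorem highPart_binarySet_union (hq : 1 < q) (hodd : Odd q) (v : ℕ) (T : Finset ℕ) :
    highPart q (binarySet v ∪ T.image (q * ·)) = T := by
  ext x
  rw [mem_highPart (by omega), mem_union, mem_image]
  constructor
  · rintro (h | ⟨y, hy, hxy⟩)
    · obtain ⟨a, ha⟩ := exists_eq_two_pow_of_mem_binarySet h
      exact absurd ⟨x, ha.symm⟩ (hodd.not_dvd_two_pow hq a)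
    · rwa [← Nat.eq_of_mul_eq_mul_left (by omega) hxy]
  · exact fun hx => Or.inr ⟨x, hx, rfl⟩

theorem highPart_mem_reprSet (hq : 1 < q) (hodd : Odd q) {S : Finset ℕ} {n : ℕ}
    (hS : S ∈ reprSet q n) : highPart q S ∈ reprSet q ((highPart q S).sum id) := by
  refine ⟨fun x hx => ?_, rfl⟩
  obtain ⟨a, b, hab⟩ := hS.1 _ ((mem_highPart (by omega)).1 hx)
  obtain ⟨b', rfl⟩ := exists_eq_two_pow_mul_pow_of_mul_eq hq hodd hab
  exact ⟨a, b', rfl⟩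

theorem binarySet_union_mem_reprSet (hq : 1 < q) (hodd : Odd q) {m n : ℕ} (hmn : q * m ≤ n)
    {T : Finset ℕ} (hT : T ∈ reprSet q m) :
    binarySet (n - q * m) ∪ T.image (q * ·) ∈ reprSet q n := by
  have hdisj : Disjoint (binarySet (n - q * m)) (T.image (q * ·)) := by
    refine disjoint_left.2 fun k hk hk' => ?_
    obtain ⟨a, rfl⟩ := exists_eq_two_pow_of_mem_binarySet hk
    obtain ⟨x, -, hx⟩ := mem_image.1 hk'
    exact hodd.not_dvd_two_pow hq a ⟨x, hx.symm⟩
  refine ⟨fun k hk => ?_, ?_⟩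
  · rcases mem_union.1 hk with hk | hk
    · obtain ⟨a, rfl⟩ := exists_eq_two_pow_of_mem_binarySet hk
      exact ⟨a, 0, by ring⟩
    · obtain ⟨x, hx, rfl⟩ := mem_image.1 hk
      obtain ⟨a, b, rfl⟩ := hT.1 x hx
      exact ⟨a, b + 1, by ring⟩
  · rw [sum_union hdisj, sum_binarySet, sum_image fun x _ y _ h => Nat.eq_of_mul_eq_mul_left
      (by omega) h]
    have hsum : ∑ x ∈ T, q * x = q * m := by rw [← mul_sum]; exact congrArg (q * ·) hT.2
    simp only [id, hsum]
    omega

theorem binarySet_union_highPart (hq : 0 < q) {S : Finset ℕ} {n : ℕ}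
    (hS : S ∈ reprSet q n) :
    binarySet (n - q * (highPart q S).sum id) ∪ (highPart q S).image (q * ·) = S := by
  have hlow : ∀ k ∈ {k ∈ S | ¬ q ∣ k}, ∃ a, k = 2 ^ a := by
    intro k hk
    obtain ⟨hkS, hkq⟩ := mem_filter.1 hk
    obtain ⟨a, _ | b, rfl⟩ := hS.1 k hkS
    · exact ⟨a, by ring⟩
    · exact absurd ⟨2 ^ a * q ^ b, by ring⟩ hkq
  rw [← hS.2, sum_eq_sum_filter_add_mul_sum_highPart hq, Nat.add_sub_cancel,
    binarySet_sum hlow, image_mul_highPart hq, union_comm, filter_union_filter_not_eq]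

theorem ncard_reprSet_eq_sum (hq : 1 < q) (hodd : Odd q) (n : ℕ) :
    (reprSet q n).ncard = ∑ m ∈ range (n / q + 1), (reprSet q m).ncard := by
  have hq0 : 0 < q := by omega
  simp only [Set.ncard_eq_toFinset_card _ (reprSet_finite q _)]
  rw [← card_sigma]
  refine card_nbij' (fun S => ⟨(highPart q S).sum id, highPart q S⟩)
    (fun p => binarySet (n - q * p.1) ∪ p.2.image (q * ·)) (fun S hS => ?_) (fun p hp => ?_)
    (fun S hS => ?_) (fun p hp => ?_)
  · simp only [mem_coe, Set.Finite.mem_toFinset, mem_sigma, mem_range] at hS ⊢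
    refine ⟨Nat.lt_succ_of_le ((Nat.le_div_iff_mul_le hq0).2 ?_), highPart_mem_reprSet hq hodd hS⟩
    rw [mul_comm, ← hS.2, sum_eq_sum_filter_add_mul_sum_highPart hq0 S]
    exact Nat.le_add_left _ _
  · simp only [mem_coe, Set.Finite.mem_toFinset, mem_sigma, mem_range] at hp ⊢
    exact binarySet_union_mem_reprSet hq hodd
      (by rw [mul_comm]; exact (Nat.le_div_iff_mul_le hq0).1 (Nat.le_of_lt_succ hp.1)) hp.2
  · simp only [mem_coe, Set.Finite.mem_toFinset] at hS
    exact binarySet_union_highPart hq0 hS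
  · obtain ⟨m, T⟩ := p
    simp only [mem_coe, Set.Finite.mem_toFinset, mem_sigma] at hp
    simp only [highPart_binarySet_union hq hodd, hp.2.2]

end Decomposition

theorem stmt14 (q : ℕ) (hq : 2 < q) (hodd : Odd q) :
    Filter.Tendsto (fun n : ℕ => (fpq 2 q (n + 1) : ℝ) / (fpq 2 q n))
      Filter.atTop (nhds 1) := by
  have hrec : IsQaryRecurrent q (fpq 2 q) := fun n => by
    simpa only [fpq_two_eq_ncard_reprSet] using ncard_reprSet_eq_sum (by omega) hodd n
  have hzero : 0 < fpq 2 q 0 := by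
    rw [fpq_two_eq_ncard_reprSet]
    exact (Set.ncard_pos (reprSet_finite q 0)).2 ⟨∅, empty_mem_reprSet_zero q⟩
  exact hrec.tendsto_succ_div hq.le hzero
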